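/- arXiv:2003.01679 — 3 statements merged into one kernel-verified Lean document; each statement's English description precedes it below -/
import Mathlib

section
/- If n = ℓ^d for some ℓ ∈ ℕ, then every edge-isoperimetric minimizer C ⊂ ℤ^d with #C = n satisfies #Θ_d(C) ≥ 2d·n^{(d−1)/d}, with equality for the cube {1,…,ℓ}^d; in particular EIP^d(ℓ^d) = 2d·ℓ^{d−1}. -/
/-- Two points of `ℤ^d` are adjacent (nearest neighbors) if their Euclidean
distance is 1, i.e. `∑ i (x i - y i)^2 = 1`. -/
def adj {d : ℕ} (x y : Fin d → ℤ) : Prop := (∑ i, (x i - y i) ^ 2) = 1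

/-- The edge boundary `Θ_d(C)`. -/
def edgeBoundary {d : ℕ} (C : Set (Fin d → ℤ)) : Set ((Fin d → ℤ) × (Fin d → ℤ)) :=
  {p | p.1 ∈ C ∧ p.2 ∉ C ∧ adj p.1 p.2}

/-- The edge perimeter `#Θ_d(C)`. -/
noncomputable def thetaCard {d : ℕ} (C : Set (Fin d → ℤ)) : ℕ := (edgeBoundary C).ncard

/-- The set of ordered bonded pairs in `C`; its cardinality is `2·b(C)`
where `b(C)` is the number of bonds. -/
def bondPairs {d : ℕ} (C : Set (Fin d → ℤ)) : Set ((Fin d → ℤ) × (Fin d → ℤ)) :=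
  {p | p.1 ∈ C ∧ p.2 ∈ C ∧ adj p.1 p.2}

/-- `2·b(C)`, twice the number of bonds of `C`. -/
noncomputable def bondsTwice {d : ℕ} (C : Set (Fin d → ℤ)) : ℕ := (bondPairs C).ncard

/-- The minimal edge perimeter among subsets of `ℤ^d` of cardinality `n`. -/
noncomputable def EIP (d n : ℕ) : ℕ :=
  sInf {m | ∃ C : Set (Fin d → ℤ), C.Finite ∧ C.ncard = n ∧ thetaCard C = m}

/-!
Every line of `C` parallel to the `i`-th axis leaves `C` at both of its ends, so `#Θ(C)` is at
least twice the total size `∑ᵢ #πᵢ(C)` of the coordinate projections of `C`. Slicing along one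
coordinate and applying weighted AM–GM inductively gives `∑ᵢ #πᵢ(C) ≥ d · #C ^ (1 - 1/d)`, a sum
form of the Loomis–Whitney inequality, which is `d ℓ^(d-1)` when `#C = ℓ^d`. The cube attains the
bound: in each of the `2d` directions its boundary edges leave through a face of `ℓ^(d-1)` points.
-/

open Finset

theorem mul_rpow_neg_inv_le_rpow_one_sub_inv {n P : ℝ} (hn : 0 < n) (hnP : n ≤ P) (k : ℕ) :
    n * P ^ (-(k : ℝ)⁻¹) ≤ n ^ (1 - (k : ℝ)⁻¹) := by
  rw [sub_eq_add_neg, Real.rpow_add hn, Real.rpow_one]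
  exact mul_le_mul_of_nonneg_left
    (Real.rpow_le_rpow_of_nonpos hn hnP (neg_nonpos.2 (by positivity))) hn.le

theorem add_one_mul_rpow_le (k : ℕ) {N P : ℝ} (hN : 0 ≤ N) (hP : 1 ≤ P) :
    (k + 1) * N ^ (1 - ((k : ℝ) + 1)⁻¹) ≤ k * (N * P ^ (-(k : ℝ)⁻¹)) + P := by
  rcases Nat.eq_zero_or_pos k with rfl | hk
  · simpa using hP
  have hk' : (k : ℝ) ≠ 0 := by positivity
  set w := ((k : ℝ) + 1)⁻¹ with hw
  have hw₁ : (k : ℝ) * w = 1 - w := by rw [hw]; field_simp; ring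
  have hP0 : 0 < P := zero_lt_one.trans_le hP
  -- weights `k/(k+1)` and `1/(k+1)` make the powers of `P` cancel in the geometric mean
  have hamgm := Real.geom_mean_le_arith_mean2_weighted (w₁ := k * w) (w₂ := w)
    (p₁ := N * P ^ (-(k : ℝ)⁻¹)) (p₂ := P) (by positivity) (by positivity) (by positivity)
    hP0.le (by rw [hw₁]; ring)
  have hexp : -(k : ℝ)⁻¹ * (k * w) + w = 0 := by field_simp; ring
  rw [Real.mul_rpow hN (by positivity), ← Real.rpow_mul hP0.le, mul_assoc, ← Real.rpow_add hP0,
    hexp, Real.rpow_zero, mul_one, hw₁] at hamgm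
  calc (k + 1) * N ^ (1 - w) ≤ (k + 1) * ((1 - w) * (N * P ^ (-(k : ℝ)⁻¹)) + w * P) := by
        gcongr
    _ = k * (N * P ^ (-(k : ℝ)⁻¹)) + P := by rw [hw]; field_simp; ring

section Projection

variable {ι : Type*} [Fintype ι] [DecidableEq ι]

def coordProj (i : ι) (A : Finset (ι → ℤ)) : Finset (ι → ℤ) :=
  A.image (Function.update · i 0)

theorem card_filter_apply_eq_le_card_coordProj (A : Finset (ι → ℤ)) (i : ι) (t : ℤ) :
    #{x ∈ A | x i = t} ≤ #(coordProj i A) := by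
  refine card_le_card_of_injOn (Function.update · i 0)
    (fun x hx => mem_image_of_mem _ (mem_filter.1 hx).1) fun x hx y hy hxy => ?_
  have hxt := (mem_filter.1 hx).2
  have hyt := (mem_filter.1 hy).2
  funext j
  by_cases hj : j = i
  · subst hj; rw [hxt, hyt]
  · simpa [Function.update_of_ne hj] using congrFun hxy j

theorem card_coordProj_eq_sum_card_coordProj_filter (A : Finset (ι → ℤ)) {i j : ι}
    (hij : i ≠ j) :
    #(coordProj i A) = ∑ t ∈ A.image (· j), #(coordProj i {x ∈ A | x j = t}) := by
  rw [card_eq_sum_card_fiberwise (f := (· j)) (t := A.image (· j))]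
  · refine sum_congr rfl fun t _ => ?_
    rw [coordProj, coordProj, filter_image]
    simp only [Function.update_of_ne hij.symm]
  · rintro _ hy
    obtain ⟨x, hx, rfl⟩ := mem_image.1 (mem_coe.1 hy)
    simpa [Function.update_of_ne hij.symm] using mem_image_of_mem (· j) hx

theorem card_rpow_le_sum_card_coordProj (s : Finset ι) {A : Finset (ι → ℤ)}
    (hA : A.Nonempty) :
    (#s : ℝ) * (#A : ℝ) ^ (1 - (#s : ℝ)⁻¹) ≤ ∑ i ∈ s, (#(coordProj i A) : ℝ) := by
  induction s using Finset.induction_on generalizing A with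
  | empty => simp
  | insert j s hj ih =>
    rw [sum_insert hj, card_insert_of_notMem hj]
    push_cast
    have hfiber_le (t : ℤ) : (#{x ∈ A | x j = t} : ℝ) ≤ #(coordProj j A) := by
      exact_mod_cast card_filter_apply_eq_le_card_coordProj A j t
    have hP : 1 ≤ (#(coordProj j A) : ℝ) := Nat.one_le_cast.2 (hA.image _).card_pos
    generalize (#(coordProj j A) : ℝ) = P at hfiber_le hP ⊢
    have hslices : #s * (#A * P ^ (-(#s : ℝ)⁻¹)) ≤ ∑ i ∈ s, (#(coordProj i A) : ℝ) :=
      calc #s * (#A * P ^ (-(#s : ℝ)⁻¹))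
          = ∑ t ∈ A.image (· j), #s * (#{x ∈ A | x j = t} * P ^ (-(#s : ℝ)⁻¹)) := by
            rw [card_eq_sum_card_image (· j) A]
            push_cast
            rw [sum_mul, mul_sum]
        _ ≤ ∑ t ∈ A.image (· j), #s * (#{x ∈ A | x j = t} : ℝ) ^ (1 - (#s : ℝ)⁻¹) := by
            gcongr with t ht
            exact mul_rpow_neg_inv_le_rpow_one_sub_inv
              (by exact_mod_cast (fiber_nonempty_iff_mem_image.2 ht).card_pos) (hfiber_le t) _
        _ ≤ ∑ t ∈ A.image (· j), ∑ i ∈ s, (#(coordProj i {x ∈ A | x j = t}) : ℝ) :=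
            sum_le_sum fun t ht => ih (fiber_nonempty_iff_mem_image.2 ht)
        _ = ∑ i ∈ s, (#(coordProj i A) : ℝ) := by
            rw [sum_comm]
            refine sum_congr rfl fun i hi => ?_
            rw [card_coordProj_eq_sum_card_coordProj_filter A (ne_of_mem_of_not_mem hi hj)]
            push_cast
            rfl
    linarith [add_one_mul_rpow_le #s (Nat.cast_nonneg (α := ℝ) #A) hP]

theorem card_coordProj_le_card_filter_add_single_notMem (C : Finset (ι → ℤ)) (i : ι) {e : ℤ}
    (he : e ≠ 0) : #(coordProj i C) ≤ #{x ∈ C | x + Pi.single i e ∉ C} := by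
  refine card_le_card_of_surjOn (Function.update · i 0) ?_
  rintro _ hp
  obtain ⟨x₀, hx₀, rfl⟩ := mem_image.1 (mem_coe.1 hp)
  obtain ⟨x, hx, hmax⟩ :=
    exists_max_image {x ∈ C | Function.update x i 0 = Function.update x₀ i 0}
      (fun x => e * x i) ⟨x₀, mem_filter.2 ⟨hx₀, rfl⟩⟩
  obtain ⟨hxC, hxline⟩ := mem_filter.1 hx
  have hupdate : Function.update (x + Pi.single i e) i 0 = Function.update x i 0 := by
    funext j
    by_cases hj : j = i
    · subst hj; simp
    · simp [Function.update_of_ne hj, Pi.single_eq_of_ne hj]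
  refine ⟨x, mem_filter.2 ⟨hxC, fun hmem => ?_⟩, hxline⟩
  have := hmax _ (mem_filter.2 ⟨hmem, hupdate.trans hxline⟩)
  simp only [Pi.add_apply, Pi.single_eq_same, mul_add] at this
  nlinarith [mul_self_pos.2 he]

end Projection

theorem sum_sq_eq_one_iff {ι : Type*} [Fintype ι] [DecidableEq ι] {z : ι → ℤ} :
    ∑ i, z i ^ 2 = 1 ↔ ∃ i, ∃ e ∈ ({1, -1} : Finset ℤ), z = Pi.single i e := by
  constructor
  · intro h
    obtain ⟨i, hi⟩ : ∃ i, z i ≠ 0 := by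
      by_contra! h0
      simp [h0] at h
    have hsplit := add_sum_erase univ (fun j => z j ^ 2) (mem_univ i)
    have hrest_nonneg : 0 ≤ ∑ j ∈ univ.erase i, z j ^ 2 := sum_nonneg fun j _ => sq_nonneg _
    have hzi : 0 < z i ^ 2 := by positivity
    have hrest : ∑ j ∈ univ.erase i, z j ^ 2 = 0 := by omega
    refine ⟨i, z i, by simpa using sq_eq_one_iff.1 (by omega : z i ^ 2 = 1), funext fun j => ?_⟩
    rcases eq_or_ne j i with rfl | hj
    · simp
    · rw [Pi.single_eq_of_ne hj]
      exact pow_eq_zero_iff two_ne_zero |>.1 <|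
        (sum_eq_zero_iff_of_nonneg fun j _ => sq_nonneg (z j)).1 hrest j (by simp [hj])
  · rintro ⟨i, e, he, rfl⟩
    simp only [mem_insert, mem_singleton] at he
    rcases he with rfl | rfl <;> simp [Pi.single_apply]

theorem adj_iff_exists_single {d : ℕ} {x y : Fin d → ℤ} :
    adj x y ↔ ∃ i, ∃ e ∈ ({1, -1} : Finset ℤ), y = x + Pi.single i e := by
  have hsq (j : Fin d) : (x j - y j) ^ 2 = (y - x) j ^ 2 := by simp; ring
  simp only [adj, hsq, sum_sq_eq_one_iff, sub_eq_iff_eq_add']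

theorem Pi.eq_of_single_eq_single {ι M : Type*} [DecidableEq ι] [Zero M] {i i' : ι}
    {e e' : M} (he : e ≠ 0) (h : (Pi.single i e : ι → M) = Pi.single i' e') : i = i' ∧ e = e' := by
  have hii' : i = i' := by
    by_contra hne
    simpa [Pi.single_eq_of_ne hne, he] using congrFun h i
  subst hii'
  exact ⟨rfl, Pi.single_injective i h⟩

theorem thetaCard_coe_eq_sum {d : ℕ} (C : Finset (Fin d → ℤ)) :
    thetaCard (C : Set (Fin d → ℤ)) =
      ∑ i, ∑ e ∈ ({1, -1} : Finset ℤ), #{x ∈ C | x + Pi.single i e ∉ C} := by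
  have hboundary : edgeBoundary (C : Set (Fin d → ℤ)) =
      ↑((univ ×ˢ ({1, -1} : Finset ℤ)).biUnion fun p =>
        {x ∈ C | x + Pi.single p.1 p.2 ∉ C}.image fun x => (x, x + Pi.single p.1 p.2)) := by
    ext ⟨x, y⟩
    simp only [edgeBoundary, adj_iff_exists_single, Set.mem_ofPred_eq, coe_biUnion, coe_product,
      coe_univ, Set.mem_iUnion, coe_image, coe_filter, Set.mem_image, Prod.mk.injEq]
    aesop
  rw [thetaCard, hboundary, Set.ncard_coe_finset, card_biUnion, sum_product]
  · exact sum_congr rfl fun i _ => sum_congr rfl fun e _ =>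
      card_image_of_injective _ fun x x' h => congrArg Prod.fst h
  · intro p hp q hq hpq
    refine disjoint_left.2 fun e hep heq => hpq ?_
    obtain ⟨x, -, rfl⟩ := mem_image.1 hep
    obtain ⟨x', -, hx'⟩ := mem_image.1 heq
    obtain ⟨rfl, h⟩ := Prod.mk.inj hx'
    have hp0 : p.2 ≠ 0 := by aesop
    obtain ⟨h₁, h₂⟩ := Pi.eq_of_single_eq_single hp0 (add_left_cancel h).symm
    exact Prod.ext h₁ h₂

theorem two_mul_sum_card_coordProj_le_thetaCard {d : ℕ} (C : Finset (Fin d → ℤ)) :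
    2 * ∑ i, #(coordProj i C) ≤ thetaCard (C : Set (Fin d → ℤ)) := by
  rw [thetaCard_coe_eq_sum, mul_sum]
  gcongr with i
  rw [sum_pair (by norm_num : (1 : ℤ) ≠ -1), two_mul]
  exact add_le_add (card_coordProj_le_card_filter_add_single_notMem C i one_ne_zero)
    (card_coordProj_le_card_filter_add_single_notMem C i (neg_ne_zero.2 one_ne_zero))

theorem card_rpow_le_thetaCard {d : ℕ} {C : Finset (Fin d → ℤ)} (hC : C.Nonempty) :
    2 * d * (#C : ℝ) ^ (1 - (d : ℝ)⁻¹) ≤ thetaCard (C : Set (Fin d → ℤ)) := by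
  have hproj := card_rpow_le_sum_card_coordProj univ hC
  rw [card_univ, Fintype.card_fin] at hproj
  calc 2 * d * (#C : ℝ) ^ (1 - (d : ℝ)⁻¹) ≤ 2 * ∑ i, (#(coordProj i C) : ℝ) := by linarith
    _ ≤ thetaCard (C : Set (Fin d → ℤ)) := by
      exact_mod_cast two_mul_sum_card_coordProj_le_thetaCard C

theorem pow_rpow_one_sub_inv (ℓ d : ℕ) :
    ((ℓ : ℝ) ^ d) ^ (1 - (d : ℝ)⁻¹) = (ℓ : ℝ) ^ (d - 1) := by
  rcases Nat.eq_zero_or_pos d with rfl | hd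
  · simp
  rw [← Real.rpow_natCast, ← Real.rpow_mul (by positivity), ← Real.rpow_natCast]
  congr 1
  have : (d : ℝ) ≠ 0 := by positivity
  rw [Nat.cast_sub hd]
  field_simp
  simp

theorem le_thetaCard_of_ncard_eq_pow {d ℓ : ℕ} {C : Set (Fin d → ℤ)} (hC : C.Finite)
    (hcard : C.ncard = ℓ ^ d) (hℓ : 1 ≤ ℓ) : 2 * d * ℓ ^ (d - 1) ≤ thetaCard C := by
  obtain ⟨C, rfl⟩ := hC.exists_finset_coe
  rw [Set.ncard_coe_finset] at hcard
  have hC : C.Nonempty := card_pos.1 (hcard ▸ pow_pos hℓ d)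
  have := card_rpow_le_thetaCard hC
  rw [hcard, Nat.cast_pow, pow_rpow_one_sub_inv] at this
  exact_mod_cast this

noncomputable def cube (d ℓ : ℕ) : Finset (Fin d → ℤ) :=
  Fintype.piFinset fun _ => Icc 1 (ℓ : ℤ)

theorem coe_cube (d ℓ : ℕ) :
    (cube d ℓ : Set (Fin d → ℤ)) = {x : Fin d → ℤ | ∀ i, 1 ≤ x i ∧ x i ≤ (ℓ : ℤ)} := by
  ext x
  simp [cube, Pi.le_def, forall_and]

theorem card_cube (d ℓ : ℕ) : #(cube d ℓ) = ℓ ^ d := by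
  simp [cube]

theorem card_filter_add_single_notMem_cube_le {d ℓ : ℕ} (i : Fin d) {e : ℤ}
    (he : e ∈ ({1, -1} : Finset ℤ)) :
    #{x ∈ cube d ℓ | x + Pi.single i e ∉ cube d ℓ} ≤ ℓ ^ (d - 1) := by
  have hsub : {x ∈ cube d ℓ | x + Pi.single i e ∉ cube d ℓ} ⊆ Fintype.piFinset
      (Function.update (fun _ => Icc 1 (ℓ : ℤ)) i {if e = 1 then (ℓ : ℤ) else 1}) := by
    intro x hx
    simp only [cube, mem_filter, Fintype.mem_piFinset, mem_Icc, not_forall] at hx ⊢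
    obtain ⟨hxQ, j, hj⟩ := hx
    have hji : j = i := by
      by_contra hne
      simp [Pi.single_eq_of_ne hne, hxQ j] at hj
    subst hji
    intro k
    rcases eq_or_ne k j with rfl | hk
    · have := hxQ k
      simp only [mem_insert, mem_singleton] at he
      simp only [Pi.add_apply, Pi.single_eq_same] at hj
      simp only [Function.update_self, mem_singleton]
      split_ifs <;> omega
    · simpa [Function.update_of_ne hk] using hxQ k
  refine (card_le_card hsub).trans_eq ?_
  simp only [Fintype.card_piFinset, Function.apply_update (fun _ => card),
    prod_update_of_mem (mem_univ i)]
  simp [card_univ_sdiff]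

theorem thetaCard_cube_le (d ℓ : ℕ) :
    thetaCard (cube d ℓ : Set (Fin d → ℤ)) ≤ 2 * d * ℓ ^ (d - 1) := by
  rw [thetaCard_coe_eq_sum]
  calc ∑ i, ∑ e ∈ ({1, -1} : Finset ℤ), #{x ∈ cube d ℓ | x + Pi.single i e ∉ cube d ℓ}
      ≤ ∑ _i : Fin d, ∑ _e ∈ ({1, -1} : Finset ℤ), ℓ ^ (d - 1) := by
        gcongr with i _ e he
        exact card_filter_add_single_notMem_cube_le i he
    _ = 2 * d * ℓ ^ (d - 1) := by simp; ring

theorem EIP_cube_value_general (d ℓ : ℕ) (hℓ : 1 ≤ ℓ) :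
    (∀ C : Set (Fin d → ℤ), C.Finite → C.ncard = ℓ ^ d →
      thetaCard C = EIP d (ℓ ^ d) → 2 * d * ℓ ^ (d - 1) ≤ thetaCard C) ∧
    thetaCard {x : Fin d → ℤ | ∀ i, 1 ≤ x i ∧ x i ≤ (ℓ : ℤ)} = 2 * d * ℓ ^ (d - 1) ∧
    EIP d (ℓ ^ d) = 2 * d * ℓ ^ (d - 1) := by
  have hcube_finite := (cube d ℓ).finite_toSet
  have hcube_card : (cube d ℓ : Set (Fin d → ℤ)).ncard = ℓ ^ d := by
    rw [Set.ncard_coe_finset, card_cube]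
  have hcube : thetaCard (cube d ℓ : Set (Fin d → ℤ)) = 2 * d * ℓ ^ (d - 1) :=
    (thetaCard_cube_le d ℓ).antisymm (le_thetaCard_of_ncard_eq_pow hcube_finite hcube_card hℓ)
  refine ⟨fun C hC hcard _ => le_thetaCard_of_ncard_eq_pow hC hcard hℓ,
    coe_cube d ℓ ▸ hcube, ?_⟩
  have hmem : 2 * d * ℓ ^ (d - 1) ∈
      {m | ∃ C : Set (Fin d → ℤ), C.Finite ∧ C.ncard = ℓ ^ d ∧ thetaCard C = m} :=
    ⟨_, hcube_finite, hcube_card, hcube⟩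
  refine (Nat.sInf_le hmem).antisymm (le_csInf ⟨_, hmem⟩ ?_)
  rintro m ⟨C, hC, hcard, rfl⟩
  exact le_thetaCard_of_ncard_eq_pow hC hcard hℓ

/-- if `n = ℓ^d` then every `EIP^d` minimizer of cardinality `n`
has edge perimeter at least `2d·n^{(d-1)/d} = 2d·ℓ^{d-1}`, with equality for
the cube `{1,…,ℓ}^d`; in particular `EIP^d(ℓ^d) = 2d·ℓ^{d-1}`. -/
theorem EIP_cube_value (d ℓ : ℕ) (hd : 1 ≤ d) (hℓ : 1 ≤ ℓ) :
    (∀ C : Set (Fin d → ℤ), C.Finite → C.ncard = ℓ ^ d →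
      thetaCard C = EIP d (ℓ ^ d) → 2 * d * ℓ ^ (d - 1) ≤ thetaCard C) ∧
    thetaCard {x : Fin d → ℤ | ∀ i, 1 ≤ x i ∧ x i ≤ (ℓ : ℤ)} = 2 * d * ℓ ^ (d - 1) ∧
    EIP d (ℓ ^ d) = 2 * d * ℓ ^ (d - 1) :=
  EIP_cube_value_general d ℓ hℓ
end

section
/- For every ℓ ∈ ℕ and every p ∈ ℕ with p ≤ ⌊√ℓ⌋, the rectangle P = {1,…,ℓ−p} × {1,…,ℓ} ⊂ ℤ^2 is an edge-isoperimetric minimizer in ℤ^2, i.e., #Θ_2(P) = EIP^2(ℓ(ℓ−p)). -/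
/-!
Count the edge boundary by direction: each edge of `Θ(C)` is `(x, x + v)` with `v` one of the
four unit steps, `x ∈ C` and `x + v ∉ C`. In every row of `C` the rightmost point exits to the
right and the leftmost one to the left, and likewise for columns, so `#Θ(C) ≥ 2a + 2b` where `a`
and `b` count the columns and rows met by `C`, while `#C ≤ ab`. If `#C = ℓ(ℓ - p)` with
`p² ≤ ℓ`, AM–GM then forces `a + b ≥ 2ℓ - p`, and the `(ℓ - p) × ℓ` rectangle attains this.
-/

open Finset

lemma Int.sq_add_sq_eq_one_iff {a b : ℤ} :
    a ^ 2 + b ^ 2 = 1 ↔ (a = 1 ∨ a = -1) ∧ b = 0 ∨ a = 0 ∧ (b = 1 ∨ b = -1) := by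
  constructor
  · intro h
    have ha : |a| ≤ 1 := (sq_le_one_iff_abs_le_one a).mp (by nlinarith [sq_nonneg b])
    have hb : |b| ≤ 1 := (sq_le_one_iff_abs_le_one b).mp (by nlinarith [sq_nonneg a])
    obtain ⟨ha₁, ha₂⟩ := abs_le.mp ha
    obtain ⟨hb₁, hb₂⟩ := abs_le.mp hb
    interval_cases a <;> interval_cases b <;> simp_all
  · rintro (⟨rfl | rfl, rfl⟩ | ⟨rfl, rfl | rfl⟩) <;> norm_num

def unitSteps : Finset (Fin 2 → ℤ) := {![1, 0], ![-1, 0], ![0, 1], ![0, -1]}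

lemma adj_iff_sub_mem_unitSteps (x y : Fin 2 → ℤ) : adj x y ↔ y - x ∈ unitSteps := by
  have hsq : ∀ i, (x i - y i) ^ 2 = (y i - x i) ^ 2 := fun i => by ring
  simp only [adj, Fin.sum_univ_two, hsq, unitSteps, mem_insert, mem_singleton, funext_iff,
    Fin.forall_fin_two, Pi.sub_apply, Matrix.cons_val_zero, Matrix.cons_val_one,
    Int.sq_add_sq_eq_one_iff]
  tauto

def exits {d : ℕ} (C : Finset (Fin d → ℤ)) (v : Fin d → ℤ) : Finset (Fin d → ℤ) :=
  C.filter fun x => x + v ∉ C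

lemma edgeBoundary_coe_eq_image_sigma (C : Finset (Fin 2 → ℤ)) :
    edgeBoundary (C : Set (Fin 2 → ℤ)) =
      ((unitSteps.sigma (exits C)).image fun q => (q.2, q.2 + q.1) : Finset _) := by
  ext ⟨x, y⟩
  simp only [edgeBoundary, adj_iff_sub_mem_unitSteps, Set.mem_ofPred_eq, coe_image, coe_sigma,
    Set.mem_image, Set.mem_sigma_iff, mem_coe, exits, mem_filter, Sigma.exists, Prod.mk.injEq]
  constructor
  · rintro ⟨hx, hy, hv⟩
    exact ⟨y - x, x, ⟨hv, hx, by simpa using hy⟩, rfl, by abel⟩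
  · rintro ⟨v, x, ⟨hv, hx, hxv⟩, rfl, rfl⟩
    exact ⟨hx, hxv, by simpa using hv⟩

lemma thetaCard_coe_eq_sum_card_exits (C : Finset (Fin 2 → ℤ)) :
    thetaCard (C : Set (Fin 2 → ℤ)) = ∑ v ∈ unitSteps, #(exits C v) := by
  rw [thetaCard, edgeBoundary_coe_eq_image_sigma, Set.ncard_coe_finset, card_image_of_injective,
    card_sigma]
  rintro ⟨v, x⟩ ⟨w, y⟩ h
  simp only [Prod.mk.injEq] at h
  obtain ⟨rfl, h⟩ := h
  simp_all

lemma thetaCard_coe_eq_card_exits_add (C : Finset (Fin 2 → ℤ)) :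
    thetaCard (C : Set (Fin 2 → ℤ)) = #(exits C ![1, 0]) + #(exits C ![-1, 0]) +
      #(exits C ![0, 1]) + #(exits C ![0, -1]) := by
  rw [thetaCard_coe_eq_sum_card_exits, unitSteps, sum_insert, sum_insert, sum_insert,
    sum_singleton]
  · ring
  all_goals decide

/-- The `g`-largest point of each fibre of `f` in `C` is sent out of `C` by `s`. -/
lemma card_image_le_card_filter_notMem {α β γ : Type*} [DecidableEq α] [DecidableEq β]
    [LinearOrder γ] (C : Finset α) (f : α → β) (g : α → γ) (s : α → α)
    (hf : ∀ x, f (s x) = f x) (hg : ∀ x, g x < g (s x)) :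
    #(C.image f) ≤ #(C.filter fun x => s x ∉ C) := by
  refine (card_le_card ?_).trans (card_image_le (f := f))
  intro y hy
  obtain ⟨x₀, hx₀, rfl⟩ := mem_image.mp hy
  obtain ⟨x, hx, hmax⟩ := (C.filter fun x => f x = f x₀).exists_max_image g ⟨x₀, by simp [hx₀]⟩
  rw [mem_filter] at hx
  refine mem_image.mpr ⟨x, mem_filter.mpr ⟨hx.1, fun hsx => ?_⟩, hx.2⟩
  exact (hg x).not_ge (hmax (s x) (mem_filter.mpr ⟨hsx, (hf x).trans hx.2⟩))

lemma card_image_le_card_exits {d : ℕ} (C : Finset (Fin d → ℤ)) {i j : Fin d} {v : Fin d → ℤ}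
    (hvj : v j = 0) (hvi : v i ≠ 0) : #(C.image (· j)) ≤ #(exits C v) := by
  rcases hvi.lt_or_gt with hneg | hpos
  · exact card_image_le_card_filter_notMem C _ (fun x => -x i) (· + v)
      (by simp [hvj]) (by simpa using hneg)
  · exact card_image_le_card_filter_notMem C _ (· i) (· + v) (by simp [hvj]) (by simpa using hpos)

lemma two_mul_card_image_add_le_thetaCard (C : Finset (Fin 2 → ℤ)) :
    2 * #(C.image (· 0)) + 2 * #(C.image (· 1)) ≤ thetaCard (C : Set (Fin 2 → ℤ)) := by
  have h₀ := card_image_le_card_exits C (i := 0) (v := ![1, 0]) (j := 1) rfl (by simp)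
  have h₁ := card_image_le_card_exits C (i := 0) (v := ![-1, 0]) (j := 1) rfl (by simp)
  have h₂ := card_image_le_card_exits C (i := 1) (v := ![0, 1]) (j := 0) rfl (by simp)
  have h₃ := card_image_le_card_exits C (i := 1) (v := ![0, -1]) (j := 0) rfl (by simp)
  rw [thetaCard_coe_eq_card_exits_add]
  omega

lemma card_le_card_image_mul_card_image (C : Finset (Fin 2 → ℤ)) :
    #C ≤ #(C.image (· 0)) * #(C.image (· 1)) := by
  rw [← card_product]
  refine card_le_card_of_injOn (fun x => (x 0, x 1)) (fun x hx => ?_) (fun x _ y _ h => ?_)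
  · exact mem_product.mpr ⟨mem_image_of_mem _ hx, mem_image_of_mem _ hx⟩
  · simp only [Prod.mk.injEq] at h
    ext i; fin_cases i <;> simp [h.1, h.2]

noncomputable def rect (A B : ℤ) : Finset (Fin 2 → ℤ) :=
  Fintype.piFinset ![Icc 1 A, Icc 1 B]

lemma mem_rect {A B : ℤ} {x : Fin 2 → ℤ} :
    x ∈ rect A B ↔ (1 ≤ x 0 ∧ x 0 ≤ A) ∧ (1 ≤ x 1 ∧ x 1 ≤ B) := by
  simp [rect, Fin.forall_fin_two]

lemma coe_rect (A B : ℤ) :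
    (rect A B : Set (Fin 2 → ℤ)) = {x | (1 ≤ x 0 ∧ x 0 ≤ A) ∧ (1 ≤ x 1 ∧ x 1 ≤ B)} := by
  ext x; simp [mem_rect]

lemma card_rect (A B : ℤ) : #(rect A B) = A.toNat * B.toNat := by
  simp [rect]

lemma thetaCard_rect_le (A B : ℤ) :
    thetaCard (rect A B : Set (Fin 2 → ℤ)) ≤ 2 * A.toNat + 2 * B.toNat := by
  have h_horizontal : ∀ v : Fin 2 → ℤ, v 1 = 0 → (v 0 = 1 ∨ v 0 = -1) →
      #(exits (rect A B) v) ≤ B.toNat := by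
    intro v hv₁ hv₀
    refine (card_le_card_of_injOn (· 1) (t := Icc 1 B) (fun x hx => ?_)
      (fun x hx y hy h => ?_)).trans (by simp)
    all_goals simp only [exits, mem_rect, coe_filter, Set.mem_ofPred_eq, Pi.add_apply, mem_coe,
      mem_Icc, funext_iff, Fin.forall_fin_two] at *
    all_goals omega
  have h_vertical : ∀ v : Fin 2 → ℤ, v 0 = 0 → (v 1 = 1 ∨ v 1 = -1) →
      #(exits (rect A B) v) ≤ A.toNat := by
    intro v hv₀ hv₁
    refine (card_le_card_of_injOn (· 0) (t := Icc 1 A) (fun x hx => ?_)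
      (fun x hx y hy h => ?_)).trans (by simp)
    all_goals simp only [exits, mem_rect, coe_filter, Set.mem_ofPred_eq, Pi.add_apply, mem_coe,
      mem_Icc, funext_iff, Fin.forall_fin_two] at *
    all_goals omega
  have := h_horizontal ![1, 0] rfl (by simp)
  have := h_horizontal ![-1, 0] rfl (by simp)
  have := h_vertical ![0, 1] rfl (by simp)
  have := h_vertical ![0, -1] rfl (by simp)
  rw [thetaCard_coe_eq_card_exits_add]
  omega

/-- AM–GM: if `a + b < 2ℓ - p` then `4ab ≤ (2ℓ - p - 1)² < 4ℓ(ℓ - p)`, the last step because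
`(p + 1)² < 4ℓ`. -/
lemma two_mul_add_two_mul_le_of_le_mul {ℓ p a b : ℕ} (hp : p * p ≤ ℓ) (hpℓ : p < ℓ)
    (h : ℓ * (ℓ - p) ≤ a * b) : 2 * (ℓ - p) + 2 * ℓ ≤ 2 * a + 2 * b := by
  obtain ⟨q, rfl⟩ := Nat.exists_eq_add_of_lt hpℓ
  rw [show p + q + 1 - p = q + 1 by omega] at h ⊢
  by_contra! hlt
  have hsum : a + b + 1 ≤ 2 * q + p + 2 := by omega
  nlinarith [sq_nonneg ((a : ℤ) - b)]

lemma thetaCard_eq_EIP_of_forall_le {d : ℕ} {P : Set (Fin d → ℤ)} (hP : P.Finite)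
    (hmin : ∀ C : Set (Fin d → ℤ), C.Finite → C.ncard = P.ncard → thetaCard P ≤ thetaCard C) :
    thetaCard P = EIP d P.ncard :=
  le_antisymm (le_csInf ⟨_, P, hP, rfl, rfl⟩ fun _ ⟨C, hC, hcard, hθ⟩ => hθ ▸ hmin C hC hcard)
    (Nat.sInf_le ⟨P, hP, rfl, rfl⟩)

/-- for `p ≤ ⌊√ℓ⌋`, the rectangle `{1,…,ℓ-p} × {1,…,ℓ} ⊂ ℤ²`
is an edge-isoperimetric minimizer: `#Θ₂(P) = EIP²(ℓ(ℓ-p))`. -/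
theorem rectangle_minimizer (ℓ p : ℕ) (hp : p ≤ Nat.sqrt ℓ) :
    thetaCard {x : Fin 2 → ℤ | (1 ≤ x 0 ∧ x 0 ≤ (ℓ : ℤ) - (p : ℤ)) ∧
        (1 ≤ x 1 ∧ x 1 ≤ (ℓ : ℤ))} = EIP 2 (ℓ * (ℓ - p)) := by
  have hpp : p * p ≤ ℓ := Nat.le_sqrt.mp hp
  have hcard : (rect ((ℓ : ℤ) - p) ℓ : Set (Fin 2 → ℤ)).ncard = ℓ * (ℓ - p) := by
    rw [Set.ncard_coe_finset, card_rect, mul_comm]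
    congr 1; omega
  rw [← coe_rect, ← hcard]
  refine thetaCard_eq_EIP_of_forall_le (finite_toSet _) fun C' hC' hC'card => ?_
  obtain ⟨C, rfl⟩ := hC'.exists_finset_coe
  rw [hcard, Set.ncard_coe_finset] at hC'card
  rcases lt_or_ge p ℓ with hpℓ | hℓp
  · calc thetaCard (rect ((ℓ : ℤ) - p) ℓ : Set (Fin 2 → ℤ))
        ≤ 2 * (ℓ - p) + 2 * ℓ := (thetaCard_rect_le _ _).trans_eq (by congr 2; omega)
      _ ≤ 2 * #(C.image (· 0)) + 2 * #(C.image (· 1)) :=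
        two_mul_add_two_mul_le_of_le_mul hpp hpℓ (hC'card ▸ card_le_card_image_mul_card_image C)
      _ ≤ thetaCard (C : Set (Fin 2 → ℤ)) := two_mul_card_image_add_le_thetaCard C
  · have hempty : rect ((ℓ : ℤ) - p) ℓ = ∅ :=
      eq_empty_of_forall_notMem fun x hx => by rw [mem_rect] at hx; omega
    simp [hempty, thetaCard, edgeBoundary]
end

section
/- The function n ↦ EIP^d(n) is nondecreasing on ℕ: for m ≤ n, EIP^d(m) ≤ EIP^d(n). -/
/-!
Removing from a finite set `C` a point `x` of maximal coordinate sum does not increase the edge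
perimeter. The bonds of `C` at `x` become boundary edges `(a, x)` of `C \ {x}`, but each of them
is matched with the boundary edge `(x, 2x - a)` of `C`: since `∑ᵢ (aᵢ - xᵢ) ≡ ∑ᵢ (aᵢ - xᵢ)² = 1`
(mod 2), a neighbour `a` has coordinate sum different from, hence smaller than, that of `x`, so the
reflected point `2x - a` has larger coordinate sum and lies outside `C`. Applied to a minimizer
of size `n + 1`, this gives `EIP d n ≤ EIP d (n + 1)`.
-/

section

variable {d : ℕ}

lemma adj_reflect {a x : Fin d → ℤ} (h : adj a x) : adj x (fun i => 2 * x i - a i) := by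
  unfold adj at h ⊢
  rw [← h]
  exact Finset.sum_congr rfl fun i _ => by ring

lemma abs_sub_le_one_of_adj {a b : Fin d → ℤ} (h : adj a b) (i : Fin d) : |a i - b i| ≤ 1 := by
  rw [← sq_le_one_iff_abs_le_one, ← h]
  exact Finset.single_le_sum (f := fun i => (a i - b i) ^ 2) (fun i _ => sq_nonneg _)
    (Finset.mem_univ i)

lemma sum_ne_of_adj {a b : Fin d → ℤ} (h : adj a b) : ∑ i, a i ≠ ∑ i, b i := by
  intro hsum
  have heven : Even (∑ i, (a i - b i) ^ 2 - ∑ i, (a i - b i)) := by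
    rw [← Finset.sum_sub_distrib]
    refine Finset.even_sum _ fun i _ => ?_
    rw [sq, ← mul_sub_one]
    exact Int.even_mul_pred_self _
  rw [h, Finset.sum_sub_distrib, hsum, sub_self, sub_zero] at heven
  exact Int.not_even_one heven

lemma setOf_adj_finite (a : Fin d → ℤ) : {b | adj a b}.Finite :=
  (Set.finite_Icc (a - 1) (a + 1)).subset fun b hb => by
    refine ⟨fun i => ?_, fun i => ?_⟩ <;>
      have := abs_le.mp (abs_sub_le_one_of_adj hb i) <;>
      simp only [Pi.sub_apply, Pi.add_apply, Pi.one_apply] <;> omega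

lemma edgeBoundary_finite {C : Set (Fin d → ℤ)} (hC : C.Finite) : (edgeBoundary C).Finite :=
  (hC.biUnion fun a _ => (Set.finite_singleton a).prod (setOf_adj_finite a)).subset
    fun _ hp => Set.mem_biUnion hp.1 ⟨rfl, hp.2.2⟩

lemma thetaCard_diff_singleton_le {C : Set (Fin d → ℤ)} (hC : C.Finite) {x : Fin d → ℤ}
    (hx : x ∈ C) (hreflect : ∀ a ∈ C, adj a x → (fun i => 2 * x i - a i) ∉ C) :
    thetaCard (C \ {x}) ≤ thetaCard C := by
  classical
  let f : (Fin d → ℤ) × (Fin d → ℤ) → (Fin d → ℤ) × (Fin d → ℤ) :=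
    fun p => if p.2 = x then (x, fun i => 2 * x i - p.1 i) else p
  refine Set.ncard_le_ncard_of_injOn f ?_ ?_ (edgeBoundary_finite hC)
  · rintro ⟨a, b⟩ ⟨ha, hb, hab⟩
    by_cases hbx : b = x
    · subst hbx
      simp only [f, if_pos rfl]
      exact ⟨hx, hreflect a ha.1 hab, adj_reflect hab⟩
    · simp only [f, if_neg hbx]
      exact ⟨ha.1, fun hbC => hb ⟨hbC, hbx⟩, hab⟩
  · rintro ⟨a, b⟩ ⟨ha, -, -⟩ ⟨a', b'⟩ ⟨ha', -, -⟩ hf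
    have hax : a ≠ x := ha.2
    have hax' : a' ≠ x := ha'.2
    by_cases hbx : b = x <;> by_cases hbx' : b' = x <;>
      simp only [f, hbx, hbx', if_true, if_false, Prod.mk.injEq] at hf
    · have haa' : a = a' := funext fun i => by have := congrFun hf.2 i; omega
      rw [haa', hbx, hbx']
    · exact absurd hf.1.symm hax'
    · exact absurd hf.1 hax
    · rw [hf.1, hf.2]

lemma exists_thetaCard_diff_singleton_le {C : Set (Fin d → ℤ)} (hC : C.Finite)
    (hne : C.Nonempty) : ∃ x ∈ C, thetaCard (C \ {x}) ≤ thetaCard C := by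
  obtain ⟨x, hx, hmax⟩ := Set.exists_max_image C (fun y => ∑ i, y i) hC hne
  refine ⟨x, hx, thetaCard_diff_singleton_le hC hx fun a ha hax hrefl => ?_⟩
  have hlt : ∑ i, a i < ∑ i, x i := lt_of_le_of_ne (hmax a ha) (sum_ne_of_adj hax)
  have hsum : ∑ i, (2 * x i - a i) = 2 * ∑ i, x i - ∑ i, a i := by
    rw [Finset.sum_sub_distrib, Finset.mul_sum]
  have hrefl_le := hmax _ hrefl
  simp only [hsum] at hrefl_le
  omega

lemma EIP_le_thetaCard {n : ℕ} {C : Set (Fin d → ℤ)} (hC : C.Finite) (hn : C.ncard = n) :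
    EIP d n ≤ thetaCard C :=
  Nat.sInf_le ⟨C, hC, hn, rfl⟩

lemma exists_thetaCard_eq_EIP (hd : 1 ≤ d) (n : ℕ) :
    ∃ C : Set (Fin d → ℤ), C.Finite ∧ C.ncard = n ∧ thetaCard C = EIP d n := by
  have : Nonempty (Fin d) := ⟨⟨0, hd⟩⟩
  obtain ⟨C, -, hC, hn⟩ := (Set.infinite_univ (α := Fin d → ℤ)).exists_subset_ncard_eq n
  exact Nat.sInf_mem
    (s := {m | ∃ C : Set (Fin d → ℤ), C.Finite ∧ C.ncard = n ∧ thetaCard C = m})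
    ⟨_, C, hC, hn, rfl⟩

end

/-- `n ↦ EIP^d(n)` is nondecreasing. -/
theorem EIP_monotone (d : ℕ) (hd : 1 ≤ d) (m n : ℕ) (hmn : m ≤ n) :
    EIP d m ≤ EIP d n := by
  refine monotone_nat_of_le_succ (fun k => ?_) hmn
  obtain ⟨C, hC, hcard, hmin⟩ := exists_thetaCard_eq_EIP hd (k + 1)
  obtain ⟨x, hx, hle⟩ :=
    exists_thetaCard_diff_singleton_le hC (Set.nonempty_of_ncard_ne_zero (by omega))
  have hcard' : (C \ {x}).ncard = k := by
    rw [Set.ncard_sdiff_singleton_of_mem hx, hcard, Nat.add_sub_cancel]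
  calc EIP d k ≤ thetaCard (C \ {x}) := EIP_le_thetaCard (hC.subset Set.sdiff_subset) hcard'
    _ ≤ thetaCard C := hle
    _ = EIP d (k + 1) := hmin
end
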